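/- Let 0 < R ≤ ∞, let 1 ≤ p < ∞, and let w be a weight on (0,R). Then there exists a constant C > 0 such that sup_{0<s<R} f(s) ≤ C · ( ∫₀ᴿ (f**(t))^p w(t) dt )^{1/p} for every nonnegative nonincreasing measurable function f on (0,R) if and only if inf_{0<t<R} ( ∫₀ᵗ w(s) ds + t^p ∫ₜᴿ s^{-p} w(s) ds ) > 0. Moreover, since w is positive, this infimum condition is equivalent to lim inf_{t→0⁺} t^p ∫ₜᴿ s^{-p} w(s) ds > 0. (This characterizes the embedding Γ^p_w(0,R) ⊂ L^∞(0,R).) -/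

import Mathlib

open MeasureTheory Set ENNReal Filter

noncomputable section

/-- The open interval `(0, R)` inside `ℝ`, where `R ∈ (0, ∞]` is an extended real. -/
def DomIoo (R : ℝ≥0∞) : Set ℝ := {t : ℝ | 0 < t ∧ ENNReal.ofReal t < R}

/-- The part of `(0, R)` lying strictly above `t`. -/
def DomAbove (R : ℝ≥0∞) (t : ℝ) : Set ℝ := {s : ℝ | t < s ∧ ENNReal.ofReal s < R}

/-- `φ : [0, R) → [0, ∞)` is quasiconcave: it vanishes exactly at `0`, is nondecreasing,
and `t ↦ φ(t)/t` is nonincreasing on `(0, R)`.  (Values on `(0, R)` are finite.) -/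
def QuasiConcaveOn (R : ℝ≥0∞) (φ : ℝ → ℝ≥0∞) : Prop :=
  φ 0 = 0 ∧
  (∀ t ∈ DomIoo R, 0 < φ t ∧ φ t < ⊤) ∧
  (∀ s t : ℝ, 0 ≤ s → s ≤ t → t ∈ DomIoo R → φ s ≤ φ t) ∧
  (∀ s t : ℝ, s ∈ DomIoo R → s ≤ t → t ∈ DomIoo R →
    φ t / ENNReal.ofReal t ≤ φ s / ENNReal.ofReal s)

/-- `f` is a nonnegative nonincreasing measurable function on `(0, R)`
(nonnegativity is built into the codomain `[0, ∞]`). -/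
def NonincOn (R : ℝ≥0∞) (f : ℝ → ℝ≥0∞) : Prop :=
  Measurable f ∧ ∀ s t : ℝ, s ∈ DomIoo R → s ≤ t → t ∈ DomIoo R → f t ≤ f s

/-- The level function `f**(t) = (1/t) ∫₀ᵗ f(s) ds`. -/
def dstar (f : ℝ → ℝ≥0∞) (t : ℝ) : ℝ≥0∞ :=
  (∫⁻ s in Ioo (0 : ℝ) t, f s) / ENNReal.ofReal t

/-- The supremum operator `S_φ f(t) = (1/φ(t)) ⋅ sup_{0<s<t} φ(s) f(s)`. -/
def Ssup (φ f : ℝ → ℝ≥0∞) (t : ℝ) : ℝ≥0∞ :=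
  (⨆ s ∈ Ioo (0 : ℝ) t, φ s * f s) / φ t

/-- The supremum operator `T_ψ f(t) = (1/ψ(t)) ⋅ sup_{t<s<R} ψ(s) f(s)`. -/
def Tsup (R : ℝ≥0∞) (ψ f : ℝ → ℝ≥0∞) (t : ℝ) : ℝ≥0∞ :=
  (⨆ s ∈ DomAbove R t, ψ s * f s) / ψ t

/-- The `B`-condition: `∫₀ᵗ ds/φ(s) ≤ C ⋅ t/φ(t)` on `(0, R)` for some constant `C > 0`. -/
def BCond (R : ℝ≥0∞) (φ : ℝ → ℝ≥0∞) : Prop :=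
  ∃ C : ℝ, 0 < C ∧ ∀ t ∈ DomIoo R,
    (∫⁻ s in Ioo (0 : ℝ) t, 1 / φ s) ≤ ENNReal.ofReal C * (ENNReal.ofReal t / φ t)

/-- A weight on `(0, R)`: positive, measurable and locally integrable
(with finite integral near the origin). -/
def IsWeight (R : ℝ≥0∞) (w : ℝ → ℝ≥0∞) : Prop :=
  Measurable w ∧ (∀ t ∈ DomIoo R, 0 < w t ∧ w t < ⊤) ∧
  ∀ t ∈ DomIoo R, (∫⁻ s in Ioo (0 : ℝ) t, w s) < ⊤

/-- Nontriviality of a weight `w` for the exponent `p`: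
`∫₁^∞ s^{-p} w(s) ds < ∞` when `R = ∞`, and `∫₀ᴿ s^{-p} w(s) ds = ∞` when `R < ∞`. -/
def Nontriv (R : ℝ≥0∞) (p : ℝ) (w : ℝ → ℝ≥0∞) : Prop :=
  (R = ⊤ → (∫⁻ s in Ioi (1 : ℝ), ENNReal.ofReal s ^ (-p) * w s) < ⊤) ∧
  (R ≠ ⊤ → (∫⁻ s in DomIoo R, ENNReal.ofReal s ^ (-p) * w s) = ⊤)

/-!
For nonincreasing `f` and `0 < s < R` one has `f** ≥ f(s)` on `(0, s)` and `f**(t) ≥ f(s) s / t`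
for `t > s`, hence `‖f‖^p_{Γ^p_w} ≥ f(s)^p φ(s)` with `φ(s) = ∫₀ˢ w + s^p ∫ₛᴿ r^{-p} w`. Since
`φ(s)` is exactly `‖χ_{(0,s)}‖^p_{Γ^p_w}`, testing the embedding on `χ_{(0,s)}` gives the converse.
As `∫₀ᵗ w` is positive, nondecreasing and tends to `0` as `t → 0⁺`, only the behaviour of the second
summand of `φ` near `0` matters for `inf φ > 0`.
-/

open Topology

section Domain

variable {R : ℝ≥0∞}

lemma measurableSet_domAbove (R : ℝ≥0∞) (t : ℝ) : MeasurableSet (DomAbove R t) :=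
  (measurableSet_lt measurable_const measurable_id).inter
    (measurableSet_lt ENNReal.measurable_ofReal measurable_const)

lemma mem_domIoo_of_le {s t : ℝ} (hs : 0 < s) (hst : s ≤ t) (ht : t ∈ DomIoo R) :
    s ∈ DomIoo R :=
  ⟨hs, (ENNReal.ofReal_le_ofReal hst).trans_lt ht.2⟩

lemma Ioo_subset_domIoo {t : ℝ} (ht : t ∈ DomIoo R) : Ioo 0 t ⊆ DomIoo R :=
  fun _ hs => mem_domIoo_of_le hs.1 hs.2.le ht

lemma domIoo_mem_nhdsGT (hR : 0 < R) : DomIoo R ∈ 𝓝[>] (0 : ℝ) := by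
  obtain ⟨t, ht, h0t, htR⟩ := ENNReal.lt_iff_exists_real_btwn.mp hR
  have htD : t ∈ DomIoo R := ⟨ENNReal.ofReal_pos.mp h0t, htR⟩
  exact mem_of_superset (Ioo_mem_nhdsGT htD.1) (Ioo_subset_domIoo htD)

end Domain

section Gamma

def gammaFunctional (R : ℝ≥0∞) (p : ℝ) (w f : ℝ → ℝ≥0∞) : ℝ≥0∞ :=
  ∫⁻ t in DomIoo R, dstar f t ^ p * w t

def gammaTail (R : ℝ≥0∞) (p : ℝ) (w : ℝ → ℝ≥0∞) (t : ℝ) : ℝ≥0∞ :=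
  ENNReal.ofReal t ^ p * ∫⁻ s in DomAbove R t, ENNReal.ofReal s ^ (-p) * w s

/-- `‖χ_{(0,t)}‖_{Γ^p_w}^p`: `χ** = 1` on `(0, t)` and `χ**(s) = t / s` beyond `t`. -/
def gammaFundamental (R : ℝ≥0∞) (p : ℝ) (w : ℝ → ℝ≥0∞) (t : ℝ) : ℝ≥0∞ :=
  (∫⁻ s in Ioo (0 : ℝ) t, w s) + gammaTail R p w t

variable {R : ℝ≥0∞} {p : ℝ} {w f : ℝ → ℝ≥0∞}

lemma dstar_indicator_Ioo (a t : ℝ) :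
    dstar ((Ioo 0 a).indicator 1) t = ENNReal.ofReal (min a t) / ENNReal.ofReal t := by
  rw [dstar, lintegral_indicator_one measurableSet_Ioo,
    Measure.restrict_apply measurableSet_Ioo, Ioo_inter_Ioo, Real.volume_Ioo]
  simp

lemma lintegral_dstar_indicator_Ioo_domAbove (hp : 0 ≤ p) (a : ℝ) :
    ∫⁻ t in DomAbove R a, dstar ((Ioo 0 a).indicator 1) t ^ p * w t = gammaTail R p w a := by
  rw [gammaTail, ← lintegral_const_mul' _ _ (ENNReal.rpow_ne_top_of_nonneg hp ofReal_ne_top)]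
  refine setLIntegral_congr_fun (measurableSet_domAbove R a) fun t ht => ?_
  rw [dstar_indicator_Ioo, min_eq_left ht.1.le, ENNReal.div_rpow_of_nonneg _ _ hp,
    div_eq_mul_inv, ← ENNReal.rpow_neg, mul_assoc]

lemma lintegral_dstar_indicator_Ioc (a : ℝ) :
    ∫⁻ t in Ioc 0 a, dstar ((Ioo 0 a).indicator 1) t ^ p * w t = ∫⁻ s in Ioo 0 a, w s := by
  rw [setLIntegral_congr Ioo_ae_eq_Ioc.symm]
  refine setLIntegral_congr_fun measurableSet_Ioo fun t ht => ?_
  rw [dstar_indicator_Ioo, min_eq_right ht.2.le,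
    ENNReal.div_self (ENNReal.ofReal_pos.mpr ht.1).ne' ofReal_ne_top, one_rpow, one_mul]

lemma gammaFunctional_indicator_Ioo_le (hp : 0 ≤ p) (a : ℝ) :
    gammaFunctional R p w ((Ioo 0 a).indicator 1) ≤ gammaFundamental R p w a := by
  have hcover : DomIoo R ⊆ Ioc 0 a ∪ DomAbove R a := fun t ht =>
    (le_or_gt t a).imp (fun h => ⟨ht.1, h⟩) (fun h => ⟨h, ht.2⟩)
  calc gammaFunctional R p w ((Ioo 0 a).indicator 1)
      ≤ ∫⁻ t in Ioc 0 a ∪ DomAbove R a, dstar ((Ioo 0 a).indicator 1) t ^ p * w t :=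
        lintegral_mono_set hcover
    _ ≤ _ := lintegral_union_le _ _ _
    _ = gammaFundamental R p w a := by
        rw [lintegral_dstar_indicator_Ioc, lintegral_dstar_indicator_Ioo_domAbove hp,
          gammaFundamental]

end Gamma

section Nonincreasing

variable {R : ℝ≥0∞} {p : ℝ} {w f : ℝ → ℝ≥0∞} {s₀ : ℝ}

lemma NonincOn.mul_ofReal_le_lintegral_Ioo (hf : NonincOn R f) (hs₀ : s₀ ∈ DomIoo R) {t : ℝ}
    (hts₀ : t ≤ s₀) : f s₀ * ENNReal.ofReal t ≤ ∫⁻ s in Ioo 0 t, f s := by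
  calc f s₀ * ENNReal.ofReal t = ∫⁻ _ in Ioo 0 t, f s₀ := by
        rw [setLIntegral_const, Real.volume_Ioo, sub_zero]
    _ ≤ ∫⁻ s in Ioo 0 t, f s := setLIntegral_mono' measurableSet_Ioo fun s hs =>
        hf.2 s s₀ (mem_domIoo_of_le hs.1 (hs.2.le.trans hts₀) hs₀) (hs.2.le.trans hts₀) hs₀

lemma NonincOn.le_dstar (hf : NonincOn R f) (hs₀ : s₀ ∈ DomIoo R) {t : ℝ} (ht : 0 < t)
    (hts₀ : t ≤ s₀) : f s₀ ≤ dstar f t := by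
  rw [dstar, ENNReal.le_div_iff_mul_le (Or.inl (ENNReal.ofReal_pos.mpr ht).ne')
    (Or.inl ofReal_ne_top)]
  exact hf.mul_ofReal_le_lintegral_Ioo hs₀ hts₀

lemma NonincOn.mul_div_le_dstar (hf : NonincOn R f) (hs₀ : s₀ ∈ DomIoo R) {t : ℝ}
    (hs₀t : s₀ ≤ t) : f s₀ * ENNReal.ofReal s₀ / ENNReal.ofReal t ≤ dstar f t :=
  ENNReal.div_le_div_right ((hf.mul_ofReal_le_lintegral_Ioo hs₀ le_rfl).trans
    (lintegral_mono_set (Ioo_subset_Ioo_right hs₀t))) _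

lemma NonincOn.rpow_mul_gammaFundamental_le (hp : 0 ≤ p) (hw : Measurable w)
    (hf : NonincOn R f) (hs₀ : s₀ ∈ DomIoo R) :
    f s₀ ^ p * gammaFundamental R p w s₀ ≤ gammaFunctional R p w f := by
  have hnear : f s₀ ^ p * ∫⁻ s in Ioo 0 s₀, w s ≤ ∫⁻ t in Ioo 0 s₀, dstar f t ^ p * w t := by
    rw [← lintegral_const_mul _ hw]
    refine setLIntegral_mono' measurableSet_Ioo fun t ht => ?_
    gcongr
    exact hf.le_dstar hs₀ ht.1 ht.2.le
  have hfar : f s₀ ^ p * gammaTail R p w s₀ ≤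
      ∫⁻ t in DomAbove R s₀, dstar f t ^ p * w t := by
    have hg : Measurable fun s => ENNReal.ofReal s ^ (-p) * w s := by fun_prop
    rw [gammaTail, ← mul_assoc, ← lintegral_const_mul _ hg]
    refine setLIntegral_mono' (measurableSet_domAbove R s₀) fun t ht => ?_
    calc f s₀ ^ p * ENNReal.ofReal s₀ ^ p * (ENNReal.ofReal t ^ (-p) * w t)
        = (f s₀ * ENNReal.ofReal s₀ / ENNReal.ofReal t) ^ p * w t := by
          rw [ENNReal.div_rpow_of_nonneg _ _ hp, ENNReal.mul_rpow_of_nonneg _ _ hp,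
            div_eq_mul_inv, ← ENNReal.rpow_neg]
          ring
      _ ≤ dstar f t ^ p * w t := by
          gcongr
          exact hf.mul_div_le_dstar hs₀ ht.1.le
  have hsplit : Ioo 0 s₀ ∪ DomAbove R s₀ ⊆ DomIoo R :=
    union_subset (Ioo_subset_domIoo hs₀) fun t ht => ⟨hs₀.1.trans ht.1, ht.2⟩
  have hdisj : Disjoint (Ioo 0 s₀) (DomAbove R s₀) :=
    disjoint_left.mpr fun _ h h' => h.2.not_gt h'.1
  calc f s₀ ^ p * gammaFundamental R p w s₀
      ≤ (∫⁻ t in Ioo 0 s₀, dstar f t ^ p * w t) +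
          ∫⁻ t in DomAbove R s₀, dstar f t ^ p * w t := by
        rw [gammaFundamental, mul_add]
        exact add_le_add hnear hfar
    _ = ∫⁻ t in Ioo 0 s₀ ∪ DomAbove R s₀, dstar f t ^ p * w t :=
        (lintegral_union (measurableSet_domAbove R s₀) hdisj).symm
    _ ≤ gammaFunctional R p w f := lintegral_mono_set hsplit

end Nonincreasing

section Weight

variable {w : ℝ → ℝ≥0∞}

lemma tendsto_lintegral_Ioo_nhdsGT_zero {a : ℝ} (ha : 0 < a) (hfin : ∫⁻ s in Ioo 0 a, w s ≠ ⊤) :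
    Tendsto (fun t => ∫⁻ s in Ioo 0 t, w s) (𝓝[>] 0) (𝓝 0) := by
  have hμ : ∀ t, volume.withDensity w (Ioo 0 t) = ∫⁻ s in Ioo 0 t, w s := fun _ =>
    withDensity_apply _ measurableSet_Ioo
  have hempty : ⋂ r > (0 : ℝ), Ioo 0 r = ∅ :=
    eq_empty_of_forall_notMem fun s hs =>
      (mem_iInter₂.mp hs s (mem_iInter₂.mp hs 1 one_pos).1).2.false
  have h := tendsto_measure_biInter_gt (μ := volume.withDensity w) (s := fun r => Ioo (0 : ℝ) r)
    (fun _ _ => measurableSet_Ioo.nullMeasurableSet)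
    (fun _ _ _ hij => Ioo_subset_Ioo_right hij) ⟨a, ha, by rwa [hμ]⟩
  simpa only [hempty, measure_empty, Function.comp_def, hμ] using h

lemma lintegral_Ioo_pos (hw : Measurable w) {t : ℝ} (ht : 0 < t)
    (hpos : ∀ s ∈ Ioo 0 t, 0 < w s) : 0 < ∫⁻ s in Ioo 0 t, w s := by
  have hsupp : Function.support w ∩ Ioo 0 t = Ioo 0 t :=
    inter_eq_right.mpr fun s hs => (hpos s hs).ne'
  rw [setLIntegral_pos_iff hw, hsupp, Real.volume_Ioo, sub_zero]
  exact ENNReal.ofReal_pos.mpr ht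

end Weight

lemma pos_iInf_add_iff_pos_liminf {R : ℝ≥0∞} (hR : 0 < R) {W J : ℝ → ℝ≥0∞} (hW : Monotone W)
    (hW_pos : ∀ t ∈ DomIoo R, 0 < W t) (hW_lim : Tendsto W (𝓝[>] 0) (𝓝 0)) :
    0 < ⨅ t ∈ DomIoo R, (W t + J t) ↔ 0 < liminf J (𝓝[>] 0) := by
  constructor
  · intro hM
    obtain ⟨ε, hε, hεM⟩ := exists_between hM
    have hJ : ∀ᶠ t in 𝓝[>] (0 : ℝ), (⨅ t ∈ DomIoo R, (W t + J t)) - ε ≤ J t := by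
      filter_upwards [domIoo_mem_nhdsGT hR, hW_lim.eventually (Iio_mem_nhds hε)] with t ht hWt
      rw [tsub_le_iff_left]
      exact (iInf₂_le t ht).trans (add_le_add_left hWt.le _)
    exact (tsub_pos_of_lt hεM).trans_le (le_liminf_of_le (h := hJ))
  · intro hl
    obtain ⟨c, hc, hcl⟩ := exists_between hl
    obtain ⟨δ, hδ, hδJ⟩ := mem_nhdsGT_iff_exists_Ioo_subset.mp (eventually_lt_of_lt_liminf hcl)
    obtain ⟨t₁, ht₁D, ht₁δ⟩ :=
      Filter.nonempty_of_mem (inter_mem (domIoo_mem_nhdsGT hR) (Ioo_mem_nhdsGT hδ))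
    refine (lt_min hc (hW_pos t₁ ht₁D)).trans_le (le_iInf₂ fun t ht => ?_)
    rcases lt_or_ge t δ with htδ | hδt
    · exact (min_le_left _ _).trans ((hδJ ⟨ht.1, htδ⟩).le.trans le_add_self)
    · exact (min_le_right _ _).trans ((hW (ht₁δ.2.le.trans hδt)).trans le_self_add)

section Embedding

def GammaEmbedsLInfty (R : ℝ≥0∞) (p : ℝ) (w : ℝ → ℝ≥0∞) : Prop :=
  ∃ C : ℝ, 0 < C ∧ ∀ f : ℝ → ℝ≥0∞, NonincOn R f →
    (⨆ s ∈ DomIoo R, f s) ≤ ENNReal.ofReal C * gammaFunctional R p w f ^ (1 / p)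

variable {R : ℝ≥0∞} {p : ℝ} {w : ℝ → ℝ≥0∞}

lemma nonincOn_indicator_Ioo (a : ℝ) : NonincOn R ((Ioo 0 a).indicator 1) := by
  refine ⟨measurable_const.indicator measurableSet_Ioo, fun s t hs hst _ => ?_⟩
  by_cases ht : t ∈ Ioo 0 a
  · rw [indicator_of_mem ht, indicator_of_mem (show s ∈ Ioo 0 a from ⟨hs.1, hst.trans_lt ht.2⟩)]
    exact le_rfl
  · rw [indicator_of_notMem ht]
    exact zero_le

lemma GammaEmbedsLInfty.pos_iInf (hp : 0 < p) (h : GammaEmbedsLInfty R p w) :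
    0 < ⨅ t ∈ DomIoo R, gammaFundamental R p w t := by
  obtain ⟨C, hC, hemb⟩ := h
  have hC₀ : ENNReal.ofReal C ≠ 0 := (ENNReal.ofReal_pos.mpr hC).ne'
  have hK : 0 < (ENNReal.ofReal C)⁻¹ ^ p :=
    ENNReal.rpow_pos (ENNReal.inv_pos.mpr ofReal_ne_top) (ENNReal.inv_ne_top.mpr hC₀)
  refine hK.trans_le (le_iInf₂ fun t ht => ?_)
  have hhalf : t / 2 ∈ Ioo 0 t := ⟨half_pos ht.1, half_lt_self ht.1⟩
  have hsup : 1 ≤ ⨆ s ∈ DomIoo R, (Ioo 0 t).indicator (1 : ℝ → ℝ≥0∞) s :=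
    calc 1 = (Ioo 0 t).indicator (1 : ℝ → ℝ≥0∞) (t / 2) := by rw [indicator_of_mem hhalf]; rfl
      _ ≤ _ := le_iSup₂ (f := fun s _ => (Ioo 0 t).indicator 1 s) (t / 2)
          (Ioo_subset_domIoo ht hhalf)
  have hroot : (ENNReal.ofReal C)⁻¹ ≤
      gammaFunctional R p w ((Ioo 0 t).indicator 1) ^ p⁻¹ := by
    rw [ENNReal.inv_le_iff_le_mul (fun _ => hC₀) (fun h => absurd h ofReal_ne_top), ← one_div]
    exact hsup.trans (hemb _ (nonincOn_indicator_Ioo t))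
  exact ((ENNReal.le_rpow_inv_iff hp).mp hroot).trans
    (gammaFunctional_indicator_Ioo_le hp.le t)

lemma iSup_le_inv_mul_gammaFunctional_rpow (hp : 0 < p) (hw : Measurable w) {n : ℝ≥0∞}
    (hn₀ : n ≠ 0) (hn : n ≠ ⊤) (hnI : ∀ t ∈ DomIoo R, n ≤ gammaFundamental R p w t)
    {f : ℝ → ℝ≥0∞} (hf : NonincOn R f) :
    (⨆ s ∈ DomIoo R, f s) ≤ (n ^ (1 / p))⁻¹ * gammaFunctional R p w f ^ (1 / p) := by
  refine iSup₂_le fun s hs => ?_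
  have hpow : f s ^ p * n ≤ gammaFunctional R p w f :=
    (mul_le_mul_right (hnI s hs) _).trans (hf.rpow_mul_gammaFundamental_le hp.le hw hs)
  have hroot : f s * n ^ (1 / p) ≤ gammaFunctional R p w f ^ (1 / p) := by
    rw [one_div, ENNReal.le_rpow_inv_iff hp, ENNReal.mul_rpow_of_nonneg _ _ hp.le,
      ← ENNReal.rpow_mul, inv_mul_cancel₀ hp.ne', ENNReal.rpow_one]
    exact hpow
  rw [← ENNReal.div_eq_inv_mul, ENNReal.le_div_iff_mul_le
    (Or.inl (ENNReal.rpow_pos (pos_iff_ne_zero.mpr hn₀) hn).ne')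
    (Or.inl (ENNReal.rpow_ne_top_of_nonneg (by positivity) hn))]
  exact hroot

lemma gammaEmbedsLInfty_of_pos_iInf (hp : 0 < p) (hw : Measurable w)
    (h : 0 < ⨅ t ∈ DomIoo R, gammaFundamental R p w t) : GammaEmbedsLInfty R p w := by
  set n := min (⨅ t ∈ DomIoo R, gammaFundamental R p w t) 1
  have hn₀ : n ≠ 0 := (lt_min h one_pos).ne'
  have hn : n ≠ ⊤ := ((min_le_right _ _).trans_lt one_lt_top).ne
  have hc : n ^ (1 / p) ≠ ⊤ := ENNReal.rpow_ne_top_of_nonneg (by positivity) hn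
  have hc₀ : 0 < (n ^ (1 / p)).toReal :=
    ENNReal.toReal_pos (ENNReal.rpow_pos (pos_iff_ne_zero.mpr hn₀) hn).ne' hc
  refine ⟨(n ^ (1 / p)).toReal⁻¹, inv_pos.mpr hc₀, fun f hf => ?_⟩
  rw [ENNReal.ofReal_inv_of_pos hc₀, ENNReal.ofReal_toReal hc]
  exact iSup_le_inv_mul_gammaFunctional_rpow hp hw hn₀ hn
    (fun t ht => (min_le_left _ _).trans (iInf₂_le t ht)) hf

end Embedding

/-- The embedding `Γ^p_w(0,R) ⊂ L^∞(0,R)` holds iff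
`inf_{0<t<R} (∫₀ᵗ w + t^p ∫ₜᴿ s^{-p} w) > 0`; moreover, since `w` is positive, this
is equivalent to `liminf_{t→0⁺} t^p ∫ₜᴿ s^{-p} w > 0`. -/
theorem statement17 (R : ℝ≥0∞) (hR : 0 < R) (p : ℝ) (hp : 1 ≤ p)
    (w : ℝ → ℝ≥0∞) (hw : IsWeight R w) :
    ((∃ C : ℝ, 0 < C ∧ ∀ f : ℝ → ℝ≥0∞, NonincOn R f →
        (⨆ s ∈ DomIoo R, f s) ≤ ENNReal.ofReal C *
          (∫⁻ t in DomIoo R, dstar f t ^ p * w t) ^ (1 / p)) ↔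
      0 < ⨅ t ∈ DomIoo R,
        ((∫⁻ s in Ioo (0 : ℝ) t, w s) + ENNReal.ofReal t ^ p *
          ∫⁻ s in DomAbove R t, ENNReal.ofReal s ^ (-p) * w s)) ∧
    ((0 < ⨅ t ∈ DomIoo R,
        ((∫⁻ s in Ioo (0 : ℝ) t, w s) + ENNReal.ofReal t ^ p *
          ∫⁻ s in DomAbove R t, ENNReal.ofReal s ^ (-p) * w s)) ↔
      0 < Filter.liminf (fun t : ℝ => ENNReal.ofReal t ^ p *
          ∫⁻ s in DomAbove R t, ENNReal.ofReal s ^ (-p) * w s)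
          (nhdsWithin 0 (Ioi 0))) := by
  have hp₀ : 0 < p := zero_lt_one.trans_le hp
  obtain ⟨a, ha⟩ := Filter.nonempty_of_mem (domIoo_mem_nhdsGT hR)
  have hW_mono : Monotone fun t => ∫⁻ s in Ioo 0 t, w s := fun _ _ hst =>
    lintegral_mono_set (Ioo_subset_Ioo_right hst)
  have hW_pos : ∀ t ∈ DomIoo R, 0 < ∫⁻ s in Ioo 0 t, w s := fun t ht =>
    lintegral_Ioo_pos hw.1 ht.1 fun s hs => (hw.2.1 s (Ioo_subset_domIoo ht hs)).1
  have hW_lim := tendsto_lintegral_Ioo_nhdsGT_zero ha.1 (hw.2.2 a ha).ne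
  exact ⟨⟨GammaEmbedsLInfty.pos_iInf hp₀, gammaEmbedsLInfty_of_pos_iInf hp₀ hw.1⟩,
    pos_iInf_add_iff_pos_liminf hR hW_mono hW_pos hW_lim⟩
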